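/- If X* ⊂ ℝ^M is the image of a continuous map φ: Δ^{M-1} → ℝ^M, then there exists a sequence of Bézier simplices b^(i) with images B^(i) = b^(i)(Δ^{M-1}) such that the Hausdorff distance d_H(X*, B^(i)) converges to 0. -/

import Mathlib

/-!
By Stone–Weierstrass each coordinate of `φ` is uniformly approximated on the simplex by a
polynomial. On the simplex `∑ i, t i = 1`, so multiplying a monomial by `∑ i, t i` raises its
degree without changing its values; hence every polynomial of total degree `≤ D` agrees there with
a combination of the Bernstein basis `multinomial d * t ^ d`, `∑ i, d i = D`, i.e. with a Bézier
simplex. A uniform bound on the simplex bounds the Hausdorff distance between the images.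
-/

noncomputable def bezierMap (M D : ℕ) (p : (Fin M → ℕ) → (Fin M → ℝ)) (t : Fin M → ℝ) :
    Fin M → ℝ :=
  ∑ d ∈ Finset.Nat.antidiagonalTuple M D,
    ((Nat.multinomial Finset.univ d : ℝ) * ∏ i, t i ^ d i) • p d

open Finset

theorem Finset.prod_pow_add_pi_single {ι R : Type*} [Fintype ι] [DecidableEq ι] [CommMonoid R]
    (t : ι → R) (a : ι → ℕ) (j : ι) :
    ∏ i, t i ^ (a + Pi.single j 1 : ι → ℕ) i = t j * ∏ i, t i ^ a i := by
  simp only [Pi.add_apply, pow_add, prod_mul_distrib, Pi.single_apply, pow_ite, pow_one, pow_zero,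
    prod_ite_eq', mem_univ, if_true, mul_comm]

theorem Metric.hausdorffDist_image_le_of_dist_le {α β : Type*} [PseudoMetricSpace β]
    {f g : α → β} {s : Set α} {r : ℝ} (hr : 0 ≤ r) (h : ∀ x ∈ s, dist (f x) (g x) ≤ r) :
    hausdorffDist (f '' s) (g '' s) ≤ r :=
  hausdorffDist_le_of_mem_dist hr
    (Set.forall_mem_image.2 fun x hx => ⟨g x, Set.mem_image_of_mem g hx, h x hx⟩)
    (Set.forall_mem_image.2 fun x hx =>
      ⟨f x, Set.mem_image_of_mem f hx, dist_comm (f x) (g x) ▸ h x hx⟩)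

/-- Stone–Weierstrass: the coordinate functions separate points. -/
theorem MvPolynomial.exists_eval_near_of_isCompact {σ : Type*} {K : Set (σ → ℝ)}
    (hK : IsCompact K) {f : (σ → ℝ) → ℝ} (hf : ContinuousOn f K) {ε : ℝ} (hε : 0 < ε) :
    ∃ q : MvPolynomial σ ℝ, ∀ x ∈ K, |eval x q - f x| < ε := by
  have : CompactSpace K := isCompact_iff_compactSpace.mp hK
  let coord (i : σ) : C(K, ℝ) :=
    ⟨fun x => (x : σ → ℝ) i, (continuous_apply i).comp continuous_subtype_val⟩
  have aeval_coord (q : MvPolynomial σ ℝ) (x : K) : aeval coord q x = eval (x : σ → ℝ) q := by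
    induction q using MvPolynomial.induction_on <;> simp_all [coord]
  have hsep : (aeval (R := ℝ) coord).range.SeparatesPoints := by
    intro x y hxy
    obtain ⟨i, hi⟩ := Function.ne_iff.1 (Subtype.coe_ne_coe.2 hxy)
    exact ⟨coord i, ⟨_, ⟨X i, rfl⟩, by simp⟩, hi⟩
  obtain ⟨⟨_, q, rfl⟩, hq⟩ :=
    ContinuousMap.exists_mem_subalgebra_near_continuous_of_separatesPoints _ hsep _
      hf.domRestrict ε hε
  exact ⟨q, fun x hx => by simpa [aeval_coord] using hq ⟨x, hx⟩⟩

noncomputable def bezierLinearMap (M D : ℕ) :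
    ((Fin M → ℕ) → Fin M → ℝ) →ₗ[ℝ] (stdSimplex ℝ (Fin M) → Fin M → ℝ) where
  toFun p t := bezierMap M D p t
  map_add' p q := by ext; simp [bezierMap, smul_add, sum_add_distrib]
  map_smul' c p := by ext; simp [bezierMap, mul_sum, mul_left_comm c]

theorem bezierLinearMap_apply (M D : ℕ) (p : (Fin M → ℕ) → Fin M → ℝ)
    (t : stdSimplex ℝ (Fin M)) : bezierLinearMap M D p t = bezierMap M D p t := rfl

theorem bezierLinearMap_single {M D : ℕ} {d : Fin M → ℕ} (hd : ∑ i, d i = D) (v : Fin M → ℝ) :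
    bezierLinearMap M D (Pi.single d v) = fun t : stdSimplex ℝ (Fin M) =>
      ((Nat.multinomial univ d : ℝ) * ∏ i, (t : Fin M → ℝ) i ^ d i) • v := by
  ext1 t
  rw [bezierLinearMap_apply, bezierMap, sum_eq_single_of_mem d (Nat.mem_antidiagonalTuple.2 hd)]
  · simp
  · intro e _ he; simp [he]

theorem monomial_smul_mem_range_bezierLinearMap {M D : ℕ} {a : Fin M → ℕ} (ha : ∑ i, a i ≤ D)
    (v : Fin M → ℝ) :
    (fun t : stdSimplex ℝ (Fin M) => (∏ i, (t : Fin M → ℝ) i ^ a i) • v) ∈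
      LinearMap.range (bezierLinearMap M D) := by
  obtain ⟨k, hk⟩ := Nat.exists_eq_add_of_le ha
  clear ha
  induction k generalizing a with
  | zero =>
    have hmult : (Nat.multinomial univ a : ℝ) ≠ 0 :=
      Nat.cast_ne_zero.2 (Nat.multinomial_pos _ _).ne'
    refine ⟨Pi.single a ((Nat.multinomial univ a : ℝ)⁻¹ • v), ?_⟩
    rw [bezierLinearMap_single (by omega)]
    ext1 t
    rw [smul_smul, mul_right_comm, mul_inv_cancel₀ hmult, one_mul]
  | succ k ih =>
    have hmem := Submodule.sum_mem (LinearMap.range (bezierLinearMap M D))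
      fun j (_ : j ∈ univ) => ih (a := a + Pi.single j 1) (by simp [sum_add_distrib]; omega)
    convert hmem using 1
    ext1 t
    simp only [Finset.sum_apply, prod_pow_add_pi_single, ← sum_smul, ← sum_mul]
    rw [show ∑ i, (t : Fin M → ℝ) i = 1 from t.2.2, one_mul]

theorem eval_smul_mem_range_bezierLinearMap {M D : ℕ} {q : MvPolynomial (Fin M) ℝ}
    (hq : q.totalDegree ≤ D) (v : Fin M → ℝ) :
    (fun t : stdSimplex ℝ (Fin M) => MvPolynomial.eval (t : Fin M → ℝ) q • v) ∈
      LinearMap.range (bezierLinearMap M D) := by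
  have hmem := Submodule.sum_mem (LinearMap.range (bezierLinearMap M D))
    fun a (ha : a ∈ q.support) => Submodule.smul_mem _ (q.coeff a)
      (monomial_smul_mem_range_bezierLinearMap (a := ⇑a) (v := v) <| by
        simpa [Finsupp.sum_fintype] using (MvPolynomial.le_totalDegree ha).trans hq)
  convert hmem using 1
  ext1 t
  simp [MvPolynomial.eval_eq', sum_smul, smul_smul]

theorem exists_bezierMap_eq_eval {M D : ℕ} {q : Fin M → MvPolynomial (Fin M) ℝ}
    (hq : ∀ j, (q j).totalDegree ≤ D) :
    ∃ p, ∀ t ∈ stdSimplex ℝ (Fin M), bezierMap M D p t = fun j => MvPolynomial.eval t (q j) := by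
  obtain ⟨p, hp⟩ := Submodule.sum_mem (LinearMap.range (bezierLinearMap M D))
    fun j (_ : j ∈ univ) => eval_smul_mem_range_bezierLinearMap (hq j) (Pi.single j 1)
  refine ⟨p, fun t ht => ?_⟩
  change bezierLinearMap M D p ⟨t, ht⟩ = _
  rw [hp]
  ext j
  simp only [Finset.sum_apply, Pi.smul_apply, Pi.single_apply, smul_eq_mul, mul_ite, mul_one,
    mul_zero, sum_ite_eq, mem_univ, ↓reduceIte]
  rfl

theorem exists_bezierMap_near {M : ℕ} {φ : (Fin M → ℝ) → Fin M → ℝ}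
    (hφ : ContinuousOn φ (stdSimplex ℝ (Fin M))) {ε : ℝ} (hε : 0 < ε) :
    ∃ D p, ∀ t ∈ stdSimplex ℝ (Fin M), dist (φ t) (bezierMap M D p t) < ε := by
  choose q hq using fun j : Fin M => MvPolynomial.exists_eval_near_of_isCompact
    (isCompact_stdSimplex ℝ (Fin M)) ((continuous_apply j).comp_continuousOn hφ) hε
  obtain ⟨p, hp⟩ := exists_bezierMap_eq_eval fun j =>
    le_sup (f := fun j => (q j).totalDegree) (mem_univ j)
  refine ⟨univ.sup fun j => (q j).totalDegree, p, fun t ht => (dist_pi_lt_iff hε).2 fun j => ?_⟩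
  rw [hp t ht, Real.dist_eq, abs_sub_comm]
  exact hq j t ht

/-- The image of a continuous map on the simplex is approximated in Hausdorff distance
by images of Bézier simplices. -/
theorem bezier_simplex_hausdorff_approximation (M : ℕ) (φ : (Fin M → ℝ) → (Fin M → ℝ))
    (hφ : ContinuousOn φ (stdSimplex ℝ (Fin M))) :
    ∃ (Dseq : ℕ → ℕ) (pseq : ℕ → (Fin M → ℕ) → (Fin M → ℝ)),
      Filter.Tendsto
        (fun i => Metric.hausdorffDist (φ '' stdSimplex ℝ (Fin M))
          (bezierMap M (Dseq i) (pseq i) '' stdSimplex ℝ (Fin M)))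
        Filter.atTop (nhds 0) := by
  choose D p hp using fun i : ℕ => exists_bezierMap_near hφ (Nat.one_div_pos_of_nat (n := i))
  exact ⟨D, p, squeeze_zero (fun _ => Metric.hausdorffDist_nonneg)
    (fun i => Metric.hausdorffDist_image_le_of_dist_le (by positivity) fun t ht => (hp i t ht).le)
    tendsto_one_div_add_atTop_nhds_zero_nat⟩
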